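/- Let k ≥ 1 be an integer, γ > 0, λ₁,…,λ_k > 0, K > 0, and let U : ℝ → ℝ be twice continuously differentiable with U″(x) ≥ −K for all x ∈ ℝ. Set h* = min{ 4/(K+1), min_{1≤ℓ≤k} 8/(γλ_ℓ²), 8/(2γ + 2(K+1) + γk) } and let h ∈ (0, h*). Let φ_h : ℝ^{k+2} → ℝ^{k+2} be the map assigning to each w ∈ ℝ^{k+2} the unique y ∈ ℝ^{k+2} with G(y, w, h) = 0. Then φ_h is a bijection of ℝ^{k+2} onto itself. -/

import Mathlib

open scoped BigOperators

/-- The defining map of the implicit AVF step for the quasi-Markovian GLE.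
Index `0` is the `v`-component, indices `1,…,k` (written `ℓ.succ.castSucc` for `ℓ : Fin k`)
are the `z`-components, and index `k+1` (`Fin.last (k+1)`) is the `x`-component. -/
noncomputable def G (k : ℕ) (γ : ℝ) (lam : Fin k → ℝ) (U : ℝ → ℝ) (h : ℝ)
    (y w : EuclideanSpace ℝ (Fin (k + 2))) : EuclideanSpace ℝ (Fin (k + 2)) :=
  (EuclideanSpace.equiv (Fin (k + 2)) ℝ).symm <| fun i =>
    Fin.cases
      (y 0 - w 0 + (γ * h / 4) * (y 0 + w 0)
        + h * (∫ θ in (0:ℝ)..1,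
            deriv U (w (Fin.last (k + 1)) + θ * (y (Fin.last (k + 1)) - w (Fin.last (k + 1)))))
        - (h / 2) * ∑ ℓ : Fin k, lam ℓ * (y ℓ.succ.castSucc + w ℓ.succ.castSucc))
      (fun j =>
        Fin.lastCases
          (y (Fin.last (k + 1)) - w (Fin.last (k + 1))
            - (γ * h / 4) * (y (Fin.last (k + 1)) + w (Fin.last (k + 1)))
            - (h / 2) * (y 0 + w 0))
          (fun ℓ =>
            y ℓ.succ.castSucc - w ℓ.succ.castSucc
              + (lam ℓ * h / 2) * (y 0 + w 0)
              + (γ * lam ℓ * h / 4) * (y (Fin.last (k + 1)) + w (Fin.last (k + 1))))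
          j)
      i

/-!
Since `φ` solves `G(φ w, w, h) = 0` uniquely, it is a bijection as soon as, for every `y`, the
equation `G(y, w, h) = 0` has exactly one solution `w`. The `x`- and `z`-equations are linear in `w`
and determine `w` from its velocity `v = w 0` (`prevState`). The `v`-equation then becomes a scalar
equation `Φ(v) = 0`. As `U' + K·id` is monotone, its average over the segment from `x` to `x̄` is
one-sided Lipschitz in `x`, which makes `Φ(v) + (1 - γh/4 - h²K/4) v` antitone; the step-size
restriction makes the coefficient positive, so `Φ` is a continuous strictly decreasing function
tending to `∓∞`, and has a unique zero.
-/

open intervalIntegral Function Filter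

theorem existsUnique_eq_zero_of_antitone_add {Φ : ℝ → ℝ} (hΦ : Continuous Φ) {ε : ℝ}
    (hε : 0 < ε) (hanti : Antitone fun v => Φ v + ε * v) : ∃! v, Φ v = 0 := by
  have hstrict : StrictAnti Φ := fun a b hab => by
    nlinarith [hanti hab.le, mul_pos hε (sub_pos.2 hab)]
  have hbot : Tendsto Φ atBot atTop :=
    tendsto_atTop_mono' _ ((eventually_le_atBot 0).mono fun v hv => by
        have := hanti hv
        dsimp only [id] at this ⊢
        linarith)
      (tendsto_atTop_add_const_left _ (Φ 0)
        (tendsto_id.const_mul_atBot_of_neg (neg_neg_of_pos hε)))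
  have htop : Tendsto Φ atTop atBot :=
    tendsto_atBot_mono' _ ((eventually_ge_atTop 0).mono fun v hv => by
        have := hanti hv
        dsimp only [id] at this ⊢
        linarith)
      (tendsto_atBot_add_const_left _ (Φ 0)
        (tendsto_id.const_mul_atTop_of_neg (neg_neg_of_pos hε)))
  obtain ⟨v, hv⟩ := hΦ.surjective' hbot htop 0
  exact ⟨v, hv, fun u hu => hstrict.injective (hu.trans hv.symm)⟩

theorem monotone_add_mul_of_neg_le_deriv {f : ℝ → ℝ} (hf : Differentiable ℝ f) {K : ℝ}
    (hK : ∀ x, -K ≤ deriv f x) : Monotone fun x => f x + K * x :=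
  monotone_of_deriv_nonneg (by fun_prop) fun x => by
    rw [deriv_fun_add (hf x) (by fun_prop), deriv_const_mul_field', deriv_id'']
    linarith [hK x]

theorem Function.bijective_of_existsUnique {α β : Type*} {R : β → α → Prop} {φ : α → β}
    (hφ : ∀ w, R (φ w) w) (hφ_unique : ∀ w y, R y w → y = φ w)
    (h : ∀ y, ∃! w, R y w) :
    Bijective φ :=
  ⟨fun a b hab => (h (φ a)).unique (hφ a) (hab ▸ hφ b),
    fun y => (h y).exists.imp fun w hw => (hφ_unique w y hw).symm⟩

theorem step_bound_of_lt_div {k : ℕ} {γ K h : ℝ} (hγ : 0 ≤ γ) (hK : 0 ≤ K) (hh : 0 < h)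
    (hh' : h < 8 / (2 * γ + 2 * (K + 1) + γ * k)) : γ * h / 4 + h ^ 2 * K / 4 < 1 := by
  have hsum : h * (2 * γ + 2 * (K + 1) + γ * k) < 8 := (lt_div_iff₀ (by positivity)).1 hh'
  have hγk : 0 ≤ h * (γ * k) := by positivity
  have hhK : h * K ≤ K + 1 := by nlinarith [sq_nonneg (K - 1)]
  nlinarith

theorem forall_fin_add_two {n : ℕ} {P : Fin (n + 2) → Prop} :
    (∀ i, P i) ↔ P 0 ∧ P (Fin.last (n + 1)) ∧ ∀ ℓ : Fin n, P ℓ.succ.castSucc := by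
  rw [Fin.forall_fin_succ, Fin.forall_fin_succ']
  simp only [Fin.succ_last, Fin.succ_castSucc]
  tauto

noncomputable def segmentAverage (f : ℝ → ℝ) (c x : ℝ) : ℝ :=
  ∫ θ in (0:ℝ)..1, f (x + θ * (c - x))

section SegmentAverage
variable {f : ℝ → ℝ} {c : ℝ}

theorem continuous_segmentAverage (hf : Continuous f) : Continuous (segmentAverage f c) :=
  continuous_parametric_intervalIntegral_of_continuous' (by fun_prop) 0 1

theorem monotone_segmentAverage (hf : Continuous f) (hmono : Monotone f) :
    Monotone (segmentAverage f c) := fun x₁ x₂ hx =>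
  integral_mono_on zero_le_one ((by fun_prop : Continuous _).intervalIntegrable _ _)
    ((by fun_prop : Continuous _).intervalIntegrable _ _) fun θ hθ => hmono (by nlinarith [hθ.2])

theorem segmentAverage_add_mul (hf : Continuous f) (K x : ℝ) :
    segmentAverage (fun p => f p + K * p) c x = segmentAverage f c x + K / 2 * (x + c) := by
  unfold segmentAverage
  rw [integral_add ((by fun_prop : Continuous _).intervalIntegrable _ _)
    ((by fun_prop : Continuous _).intervalIntegrable _ _), integral_const_mul,
    integral_add intervalIntegrable_const (intervalIntegrable_id.mul_const _), integral_const,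
    integral_mul_const, integral_id, smul_eq_mul]
  ring

end SegmentAverage

section PreviousState
variable {k : ℕ} (γ : ℝ) (lam : Fin k → ℝ) (h : ℝ) (y : EuclideanSpace ℝ (Fin (k + 2)))

/-- `prevX` and `prevZ` solve the `x`- and `z`-components of `G(y, w, h) = 0` for the old state
`w` with velocity `v`. -/
noncomputable def prevX (v : ℝ) : ℝ :=
  ((4 - γ * h) * y (Fin.last (k + 1)) - 2 * h * (y 0 + v)) / (4 + γ * h)

noncomputable def prevZ (ℓ : Fin k) (v : ℝ) : ℝ :=
  y ℓ.succ.castSucc + 2 * h * lam ℓ * (y 0 + v + γ * y (Fin.last (k + 1))) / (4 + γ * h)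

noncomputable def prevState (v : ℝ) : EuclideanSpace ℝ (Fin (k + 2)) :=
  (EuclideanSpace.equiv (Fin (k + 2)) ℝ).symm fun i =>
    Fin.cases v (fun j => Fin.lastCases (prevX γ h y v) (fun ℓ => prevZ γ lam h y ℓ v) j) i

variable {γ lam h y} {v : ℝ}

theorem prevState_zero : prevState γ lam h y v 0 = v := rfl

theorem prevState_last : prevState γ lam h y v (Fin.last (k + 1)) = prevX γ h y v := by
  simp [prevState, ← Fin.succ_last]

theorem prevState_castSucc_succ (ℓ : Fin k) :
    prevState γ lam h y v ℓ.succ.castSucc = prevZ γ lam h y ℓ v := by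
  simp [prevState]

theorem eq_prevState_iff {w : EuclideanSpace ℝ (Fin (k + 2))} :
    w = prevState γ lam h y v ↔ w 0 = v ∧ w (Fin.last (k + 1)) = prevX γ h y v ∧
      ∀ ℓ : Fin k, w ℓ.succ.castSucc = prevZ γ lam h y ℓ v := by
  rw [PiLp.ext_iff, forall_fin_add_two, prevState_zero, prevState_last]
  simp only [prevState_castSucc_succ]

end PreviousState

section AVF
variable {k : ℕ} {γ : ℝ} {lam : Fin k → ℝ} {U : ℝ → ℝ} {h : ℝ}
  {y w : EuclideanSpace ℝ (Fin (k + 2))} {v : ℝ}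

theorem G_apply_zero : G k γ lam U h y w 0 =
    y 0 - w 0 + γ * h / 4 * (y 0 + w 0)
      + h * segmentAverage (deriv U) (y (Fin.last (k + 1))) (w (Fin.last (k + 1)))
      - h / 2 * ∑ ℓ, lam ℓ * (y ℓ.succ.castSucc + w ℓ.succ.castSucc) := rfl

theorem G_apply_last : G k γ lam U h y w (Fin.last (k + 1)) =
    y (Fin.last (k + 1)) - w (Fin.last (k + 1))
      - γ * h / 4 * (y (Fin.last (k + 1)) + w (Fin.last (k + 1))) - h / 2 * (y 0 + w 0) := by
  simp [G, ← Fin.succ_last]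

theorem G_apply_castSucc_succ (ℓ : Fin k) : G k γ lam U h y w ℓ.succ.castSucc =
    y ℓ.succ.castSucc - w ℓ.succ.castSucc + lam ℓ * h / 2 * (y 0 + w 0)
      + γ * lam ℓ * h / 4 * (y (Fin.last (k + 1)) + w (Fin.last (k + 1))) := by
  simp [G]

theorem G_eq_zero_iff : G k γ lam U h y w = 0 ↔
    G k γ lam U h y w 0 = 0 ∧ G k γ lam U h y w (Fin.last (k + 1)) = 0 ∧
      ∀ ℓ : Fin k, G k γ lam U h y w ℓ.succ.castSucc = 0 := by
  rw [PiLp.ext_iff, forall_fin_add_two]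
  rfl

theorem prevX_mul (hγh : 4 + γ * h ≠ 0) :
    prevX γ h y v * (4 + γ * h) = (4 - γ * h) * y (Fin.last (k + 1)) - 2 * h * (y 0 + v) :=
  div_mul_cancel₀ _ hγh

theorem G_prevState_last (hγh : 4 + γ * h ≠ 0) :
    G k γ lam U h y (prevState γ lam h y v) (Fin.last (k + 1)) = 0 := by
  rw [G_apply_last, prevState_last, prevState_zero]
  linear_combination (-1 / 4 : ℝ) * prevX_mul (v := v) hγh

theorem G_prevState_castSucc_succ (hγh : 4 + γ * h ≠ 0) (ℓ : Fin k) :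
    G k γ lam U h y (prevState γ lam h y v) ℓ.succ.castSucc = 0 := by
  have hZ : (prevZ γ lam h y ℓ v - y ℓ.succ.castSucc) * (4 + γ * h)
      = 2 * h * lam ℓ * (y 0 + v + γ * y (Fin.last (k + 1))) := by
    rw [prevZ, add_sub_cancel_left, div_mul_cancel₀ _ hγh]
  refine (mul_eq_zero_iff_right hγh).1 ?_
  rw [G_apply_castSucc_succ, prevState_castSucc_succ, prevState_last, prevState_zero]
  linear_combination -hZ + (γ * lam ℓ * h / 4) * prevX_mul (v := v) hγh

theorem G_prevState_eq_zero_iff (hγh : 4 + γ * h ≠ 0) :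
    G k γ lam U h y (prevState γ lam h y v) = 0 ↔
      G k γ lam U h y (prevState γ lam h y v) 0 = 0 := by
  rw [G_eq_zero_iff]
  exact and_iff_left ⟨G_prevState_last hγh, G_prevState_castSucc_succ hγh⟩

theorem eq_prevState_of_G_eq_zero (hγh : 4 + γ * h ≠ 0)
    (hw : G k γ lam U h y w = 0) : w = prevState γ lam h y (w 0) := by
  obtain ⟨-, hlast, hz⟩ := G_eq_zero_iff.1 hw
  rw [G_apply_last] at hlast
  have hx : w (Fin.last (k + 1)) = prevX γ h y (w 0) := by
    rw [prevX, eq_div_iff hγh]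
    linear_combination -4 * hlast
  refine eq_prevState_iff.2 ⟨rfl, hx, fun ℓ => ?_⟩
  have hzℓ := hz ℓ
  rw [G_apply_castSucc_succ, hx] at hzℓ
  rw [prevZ, ← sub_eq_iff_eq_add', eq_div_iff hγh]
  linear_combination
    -(4 + γ * h) * hzℓ + (γ * lam ℓ * h / 4) * prevX_mul (y := y) (v := w 0) hγh

theorem G_prevState_apply_zero : G k γ lam U h y (prevState γ lam h y v) 0 =
    y 0 - v + γ * h / 4 * (y 0 + v)
      + h * segmentAverage (deriv U) (y (Fin.last (k + 1))) (prevX γ h y v)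
      - h / 2 * ∑ ℓ, lam ℓ * (y ℓ.succ.castSucc + prevZ γ lam h y ℓ v) := by
  rw [G_apply_zero, prevState_zero, prevState_last]
  simp only [prevState_castSucc_succ]

theorem continuous_G_prevState_apply_zero (hdU : Continuous (deriv U)) :
    Continuous fun v => G k γ lam U h y (prevState γ lam h y v) 0 := by
  have := continuous_segmentAverage (c := y (Fin.last (k + 1))) hdU
  simp only [G_prevState_apply_zero, prevX, prevZ]
  fun_prop

theorem antitone_G_prevState_apply_zero_add {K : ℝ} (hγ : 0 ≤ γ) (hh : 0 ≤ h) (hK : 0 ≤ K)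
    (hdU : Continuous (deriv U)) (hmono : Monotone fun x => deriv U x + K * x) :
    Antitone fun v =>
      G k γ lam U h y (prevState γ lam h y v) 0 + (1 - γ * h / 4 - h ^ 2 * K / 4) * v := by
  intro v₁ v₂ hv
  have hd : 0 < 4 + γ * h := by positivity
  have hX : prevX γ h y v₁ - prevX γ h y v₂ = 2 * h * (v₂ - v₁) / (4 + γ * h) := by
    rw [prevX, prevX, ← sub_div]
    ring_nf
  have hX_nonneg : 0 ≤ prevX γ h y v₁ - prevX γ h y v₂ := by
    rw [hX]
    exact div_nonneg (by nlinarith) hd.le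
  have hX_le : prevX γ h y v₁ - prevX γ h y v₂ ≤ h / 2 * (v₂ - v₁) := by
    rw [hX, div_le_iff₀ hd]
    nlinarith [mul_nonneg (mul_nonneg hγ hh) (mul_nonneg hh (sub_nonneg.2 hv))]
  have hS := monotone_segmentAverage (c := y (Fin.last (k + 1))) (by fun_prop) hmono
    (sub_nonneg.1 hX_nonneg)
  rw [segmentAverage_add_mul hdU, segmentAverage_add_mul hdU] at hS
  have hZ : ∑ ℓ, lam ℓ * (y ℓ.succ.castSucc + prevZ γ lam h y ℓ v₁)
      ≤ ∑ ℓ, lam ℓ * (y ℓ.succ.castSucc + prevZ γ lam h y ℓ v₂) := by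
    refine Finset.sum_le_sum fun ℓ _ => ?_
    have hlam : ∀ v, lam ℓ * (y ℓ.succ.castSucc + prevZ γ lam h y ℓ v)
        = 2 * lam ℓ * y ℓ.succ.castSucc
          + 2 * h * lam ℓ ^ 2 * (y 0 + v + γ * y (Fin.last (k + 1))) / (4 + γ * h) := by
      intro v
      rw [prevZ]
      ring
    rw [hlam, hlam]
    gcongr
  have hhS := mul_le_mul_of_nonneg_left hS hh
  have hhZ := mul_le_mul_of_nonneg_left hZ (by positivity : 0 ≤ h / 2)
  have hKX := mul_le_mul_of_nonneg_left hX_le (by positivity : 0 ≤ h * K / 2)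
  simp only [G_prevState_apply_zero]
  linarith

theorem existsUnique_G_eq_zero {K : ℝ} (hγ : 0 ≤ γ) (hh : 0 ≤ h) (hK : 0 ≤ K)
    (hdU : Continuous (deriv U)) (hmono : Monotone fun x => deriv U x + K * x)
    (hstep : γ * h / 4 + h ^ 2 * K / 4 < 1) : ∃! w, G k γ lam U h y w = 0 := by
  have hγh : 4 + γ * h ≠ 0 := by positivity
  obtain ⟨v, hv, hv_unique⟩ := existsUnique_eq_zero_of_antitone_add
    (continuous_G_prevState_apply_zero (lam := lam) (y := y) hdU) (by linarith)
    (antitone_G_prevState_apply_zero_add hγ hh hK hdU hmono)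
  refine ⟨prevState γ lam h y v, (G_prevState_eq_zero_iff hγh).2 hv, fun w hw => ?_⟩
  have hw_eq := eq_prevState_of_G_eq_zero hγh hw
  rw [hw_eq, ← hv_unique (w 0) (by beta_reduce; rw [← hw_eq, hw]; rfl)]

end AVF

theorem stmt_5_general (k : ℕ) (hk : 1 ≤ k) (γ : ℝ) (hγ : 0 < γ)
    (lam : Fin k → ℝ) (K : ℝ) (hK : 0 < K)
    (U : ℝ → ℝ) (hU : ContDiff ℝ 2 U) (hU'' : ∀ x : ℝ, -K ≤ deriv (deriv U) x)
    (h : ℝ) (hh0 : 0 < h)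
    (hh : h < min (4 / (K + 1))
      (min ((Finset.univ : Finset (Fin k)).inf' ⟨⟨0, hk⟩, Finset.mem_univ _⟩
          (fun ℓ => 8 / (γ * lam ℓ ^ 2)))
        (8 / (2 * γ + 2 * (K + 1) + γ * (k : ℝ)))))
    (φ : EuclideanSpace ℝ (Fin (k + 2)) → EuclideanSpace ℝ (Fin (k + 2)))
    (hφ : ∀ w, G k γ lam U h (φ w) w = 0)
    (hφuniq : ∀ w y, G k γ lam U h y w = 0 → y = φ w) :
    Function.Bijective φ := by
  have hstep := step_bound_of_lt_div hγ.le hK.le hh0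
    (hh.trans_le ((min_le_right _ _).trans (min_le_right _ _)))
  have hmono := monotone_add_mul_of_neg_le_deriv hU.differentiable_deriv_two hU''
  exact Function.bijective_of_existsUnique hφ hφuniq fun y =>
    existsUnique_G_eq_zero hγ.le hh0.le hK.le (hU.continuous_deriv one_le_two) hmono hstep

/-- the solution map `φ_h` of the implicit AVF step, assigning to `w`
the unique `y` with `G(y, w, h) = 0`, is a bijection of `ℝ^{k+2}` onto itself. -/
theorem stmt_5 (k : ℕ) (hk : 1 ≤ k) (γ : ℝ) (hγ : 0 < γ)
    (lam : Fin k → ℝ) (hlam : ∀ ℓ, 0 < lam ℓ) (K : ℝ) (hK : 0 < K)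
    (U : ℝ → ℝ) (hU : ContDiff ℝ 2 U) (hU'' : ∀ x : ℝ, -K ≤ deriv (deriv U) x)
    (h : ℝ) (hh0 : 0 < h)
    (hh : h < min (4 / (K + 1))
      (min ((Finset.univ : Finset (Fin k)).inf' ⟨⟨0, hk⟩, Finset.mem_univ _⟩
          (fun ℓ => 8 / (γ * lam ℓ ^ 2)))
        (8 / (2 * γ + 2 * (K + 1) + γ * (k : ℝ)))))
    (φ : EuclideanSpace ℝ (Fin (k + 2)) → EuclideanSpace ℝ (Fin (k + 2)))
    (hφ : ∀ w, G k γ lam U h (φ w) w = 0)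
    (hφuniq : ∀ w y, G k γ lam U h y w = 0 → y = φ w) :
    Function.Bijective φ :=
  stmt_5_general k hk γ hγ lam K hK U hU hU'' h hh0 hh φ hφ hφuniq
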